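/- Let k, γ, ε, m₀, m₁ be real numbers with m₀ > 0, m₁ > 0, ε ≥ 0, k > 0 and 2k > γ. Let M : ℝ → (6×6 real matrices) be a differentiable matrix-valued function such that for every t: M(t) is symmetric and invertible, m₀‖x‖² ≤ xᵀ M(t) x ≤ m₁‖x‖² for all x ∈ ℝ⁶, and |xᵀ M'(t) x| ≤ γ‖x‖² for all x ∈ ℝ⁶. Let Δ : ℝ → ℝ⁶ satisfy ‖Δ(t)‖ ≤ ε for all t, and let e : ℝ → ℝ⁶ be differentiable with e'(t) = -k · M(t)⁻¹ · e(t) - k · M(t)⁻¹ · Δ(t) for all t. Then there exists a constant C ≥ 0 such that ‖e(t)‖ ≤ C for all t ≥ 0; that is, the observer error remains bounded in forward time. -/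

import Mathlib

/-!
`V = eᵀ M e` is a Lyapunov function for the error. Since `M e' = -k (e + Δ)` and `M` is symmetric,
`V' = eᵀ M' e - 2k ‖e‖² - 2k eᵀΔ ≤ -(2k - γ) ‖e‖² + 2 |k| ε ‖e‖`, and Young's inequality together
with `V ≤ m₁ ‖e‖²` gives `V' ≤ -λ V + A` for `λ = (2k - γ) / (2 m₁)` and `A = 2 (k ε)² / (2k - γ)`.
Grönwall then bounds `V` by `V 0 + A / λ` for all `t ≥ 0`, and `m₀ ‖e‖² ≤ V` bounds `‖e‖`.
-/

open Matrix

/-- Euclidean norm of a vector in `ℝⁿ` (identified with `Fin n → ℝ`). -/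
noncomputable def eNorm {n : ℕ} (x : Fin n → ℝ) : ℝ := Real.sqrt (x ⬝ᵥ x)

/-- Entrywise derivative of a matrix-valued function. -/
noncomputable def matDeriv {n : ℕ} (M : ℝ → Matrix (Fin n) (Fin n) ℝ) (t : ℝ) :
    Matrix (Fin n) (Fin n) ℝ :=
  Matrix.of fun i j => deriv (fun s => M s i j) t

section EuclideanNorm

variable {n : ℕ}

lemma eNorm_nonneg (x : Fin n → ℝ) : 0 ≤ eNorm x := Real.sqrt_nonneg _

lemma dotProduct_self_nonneg (x : Fin n → ℝ) : 0 ≤ x ⬝ᵥ x :=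
  Finset.sum_nonneg fun i _ => mul_self_nonneg (x i)

lemma eNorm_sq (x : Fin n → ℝ) : eNorm x ^ 2 = x ⬝ᵥ x :=
  Real.sq_sqrt (dotProduct_self_nonneg x)

lemma abs_dotProduct_le_eNorm_mul_eNorm (x y : Fin n → ℝ) :
    |x ⬝ᵥ y| ≤ eNorm x * eNorm y := by
  rw [eNorm, eNorm, ← Real.sqrt_mul (dotProduct_self_nonneg x)]
  refine Real.abs_le_sqrt ?_
  simpa only [dotProduct, sq] using Finset.sum_mul_sq_le_sq_mul_sq Finset.univ x y

end EuclideanNorm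

section ProductRules

variable {n : ℕ} {t : ℝ}

theorem HasDerivAt.dotProduct {u v : ℝ → Fin n → ℝ} {u' v' : Fin n → ℝ}
    (hu : HasDerivAt u u' t) (hv : HasDerivAt v v' t) :
    HasDerivAt (fun s => u s ⬝ᵥ v s) (u' ⬝ᵥ v t + u t ⬝ᵥ v') t := by
  have h : HasDerivAt (fun s => ∑ i, u s i * v s i) (∑ i, (u' i * v t i + u t i * v' i)) t :=
    HasDerivAt.fun_sum fun i _ => (hasDerivAt_pi.1 hu i).mul (hasDerivAt_pi.1 hv i)
  rw [Finset.sum_add_distrib] at h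
  exact h

theorem HasDerivAt.mulVec {M : ℝ → Matrix (Fin n) (Fin n) ℝ} {M' : Matrix (Fin n) (Fin n) ℝ}
    {v : ℝ → Fin n → ℝ} {v' : Fin n → ℝ}
    (hM : ∀ i j, HasDerivAt (fun s => M s i j) (M' i j) t) (hv : HasDerivAt v v' t) :
    HasDerivAt (fun s => M s *ᵥ v s) (M' *ᵥ v t + M t *ᵥ v') t :=
  hasDerivAt_pi.2 fun i => (hasDerivAt_pi.2 (hM i)).dotProduct hv

theorem HasDerivAt.dotProduct_mulVec_self_of_isSymm {M : ℝ → Matrix (Fin n) (Fin n) ℝ}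
    {M' : Matrix (Fin n) (Fin n) ℝ} {v : ℝ → Fin n → ℝ} {v' : Fin n → ℝ}
    (hM : ∀ i j, HasDerivAt (fun s => M s i j) (M' i j) t) (hv : HasDerivAt v v' t)
    (hsymm : (M t).IsSymm) :
    HasDerivAt (fun s => v s ⬝ᵥ M s *ᵥ v s) (v t ⬝ᵥ M' *ᵥ v t + 2 * (v t ⬝ᵥ M t *ᵥ v')) t := by
  have hcomm : v' ⬝ᵥ M t *ᵥ v t = v t ⬝ᵥ M t *ᵥ v' := by
    rw [dotProduct_mulVec, ← mulVec_transpose, hsymm.eq, dotProduct_comm]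
  convert hv.dotProduct (HasDerivAt.mulVec hM hv) using 1
  rw [dotProduct_add, hcomm]
  ring

end ProductRules

lemma le_gronwallBound_of_hasDerivAt {V V' : ℝ → ℝ} {K A t : ℝ}
    (hV : ∀ s, HasDerivAt V (V' s) s) (hbound : ∀ s, V' s ≤ K * V s + A) (ht : 0 ≤ t) :
    V t ≤ gronwallBound (V 0) K A t := by
  simpa using le_gronwallBound_of_liminf_deriv_right_le
    (fun s _ => (hV s).continuousAt.continuousWithinAt)
    (fun s _ _ hr => (hV s).hasDerivWithinAt.liminf_right_slope_le hr) le_rfl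
    (fun s _ => hbound s) t ⟨ht, le_rfl⟩

lemma gronwallBound_le_of_neg {δ K A t : ℝ} (hδ : 0 ≤ δ) (hK : K < 0) (hA : 0 ≤ A)
    (ht : 0 ≤ t) : gronwallBound δ K A t ≤ δ + A / -K := by
  have hexp : Real.exp (K * t) ≤ 1 := Real.exp_le_one_iff.2 (by nlinarith)
  have hAK : A / K * (Real.exp (K * t) - 1) = A / -K * (1 - Real.exp (K * t)) := by ring
  simp only [gronwallBound_of_K_ne_0 hK.ne, hAK]
  have : 0 ≤ A / -K := div_nonneg hA (neg_nonneg.2 hK.le)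
  nlinarith [Real.exp_pos (K * t)]

lemma two_mul_le_half_mul_sq_add_sq_div {a b c : ℝ} (hc : 0 < c) :
    2 * a * b ≤ c / 2 * a ^ 2 + 2 * b ^ 2 / c := by
  have hb : 2 * b ^ 2 / c * c = 2 * b ^ 2 := div_mul_cancel₀ _ hc.ne'
  nlinarith [sq_nonneg (c * a - 2 * b)]

lemma le_sqrt_div_of_mul_sq_le {y m B : ℝ} (hm : 0 < m) (h : m * y ^ 2 ≤ B) :
    y ≤ √(B / m) :=
  Real.le_sqrt_of_sq_le ((le_div_iff₀ hm).2 (by linarith))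

section ObserverError

variable {n : ℕ} {M M' : Matrix (Fin n) (Fin n) ℝ} {k γ ε m₁ : ℝ} {x d : Fin n → ℝ}

/-- The observer error dynamics read `e' = observerField (M t) k e Δ`. -/
noncomputable def observerField (M : Matrix (Fin n) (Fin n) ℝ) (k : ℝ) (x d : Fin n → ℝ) :
    Fin n → ℝ :=
  (-k) • (M⁻¹ *ᵥ x) - k • (M⁻¹ *ᵥ d)

lemma mulVec_observerField (hM : IsUnit M.det) :
    M *ᵥ observerField M k x d = (-k) • x - k • d := by
  rw [observerField, mulVec_sub, mulVec_smul, mulVec_smul, mulVec_mulVec, mulVec_mulVec,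
    mul_nonsing_inv _ hM, one_mulVec, one_mulVec]

lemma quadForm_deriv_along_observerField_le (hm₁ : 0 < m₁) (hk : γ < 2 * k) (hM : IsUnit M.det)
    (hMub : x ⬝ᵥ M *ᵥ x ≤ m₁ * eNorm x ^ 2) (hM' : x ⬝ᵥ M' *ᵥ x ≤ γ * eNorm x ^ 2)
    (hd : eNorm d ≤ ε) :
    x ⬝ᵥ M' *ᵥ x + 2 * (x ⬝ᵥ M *ᵥ observerField M k x d)
      ≤ -((2 * k - γ) / (2 * m₁)) * (x ⬝ᵥ M *ᵥ x) + 2 * (k * ε) ^ 2 / (2 * k - γ) := by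
  have hc : 0 < 2 * k - γ := by linarith
  rw [mulVec_observerField hM, dotProduct_sub, dotProduct_smul, dotProduct_smul, smul_eq_mul,
    smul_eq_mul, ← eNorm_sq]
  have hcross : |k * (x ⬝ᵥ d)| ≤ |k| * ε * eNorm x := by
    rw [abs_mul, mul_assoc, mul_comm ε]
    exact mul_le_mul_of_nonneg_left ((abs_dotProduct_le_eNorm_mul_eNorm x d).trans
      (mul_le_mul_of_nonneg_left hd (eNorm_nonneg x))) (abs_nonneg k)
  have hyoung := two_mul_le_half_mul_sq_add_sq_div (a := eNorm x) (b := |k| * ε) hc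
  rw [mul_pow, sq_abs, ← mul_pow] at hyoung
  have hdecay : (2 * k - γ) / (2 * m₁) * (x ⬝ᵥ M *ᵥ x) ≤ (2 * k - γ) / 2 * eNorm x ^ 2 := by
    calc (2 * k - γ) / (2 * m₁) * (x ⬝ᵥ M *ᵥ x)
        ≤ (2 * k - γ) / (2 * m₁) * (m₁ * eNorm x ^ 2) :=
          mul_le_mul_of_nonneg_left hMub (by positivity)
      _ = (2 * k - γ) / 2 * eNorm x ^ 2 := by field_simp
  linarith [neg_abs_le (k * (x ⬝ᵥ d))]

end ObserverError

theorem observer_error_bounded_under_disturbance_general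
    (k γ ε m₀ m₁ : ℝ) (hm₀ : 0 < m₀) (hm₁ : 0 < m₁)
    (hk : 2 * k > γ)
    (M : ℝ → Matrix (Fin 6) (Fin 6) ℝ)
    (hMdiff : ∀ i j, Differentiable ℝ fun t => M t i j)
    (hMsymm : ∀ t, (M t).IsSymm)
    (hMinv : ∀ t, IsUnit (M t).det)
    (hMlb : ∀ t, ∀ x : Fin 6 → ℝ, m₀ * eNorm x ^ 2 ≤ x ⬝ᵥ (M t).mulVec x)
    (hMub : ∀ t, ∀ x : Fin 6 → ℝ, x ⬝ᵥ (M t).mulVec x ≤ m₁ * eNorm x ^ 2)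
    (hMrate : ∀ t, ∀ x : Fin 6 → ℝ, |x ⬝ᵥ (matDeriv M t).mulVec x| ≤ γ * eNorm x ^ 2)
    (Δ : ℝ → Fin 6 → ℝ) (hΔ : ∀ t, eNorm (Δ t) ≤ ε)
    (e : ℝ → Fin 6 → ℝ) (he : Differentiable ℝ e)
    (hdyn : ∀ t, deriv e t = (-k) • (M t)⁻¹.mulVec (e t) - k • (M t)⁻¹.mulVec (Δ t)) :
    ∃ C : ℝ, 0 ≤ C ∧ ∀ t ≥ (0 : ℝ), eNorm (e t) ≤ C := by
  set K := -((2 * k - γ) / (2 * m₁))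
  set A := 2 * (k * ε) ^ 2 / (2 * k - γ)
  set V := fun s => e s ⬝ᵥ M s *ᵥ e s
  have hK : K < 0 := neg_neg_of_pos (div_pos (sub_pos.2 hk) (by positivity))
  have hA : 0 ≤ A := div_nonneg (by positivity) (sub_pos.2 hk).le
  have hV : ∀ s, HasDerivAt V
      (e s ⬝ᵥ matDeriv M s *ᵥ e s + 2 * (e s ⬝ᵥ M s *ᵥ deriv e s)) s := fun s =>
    HasDerivAt.dotProduct_mulVec_self_of_isSymm (fun i j => (hMdiff i j s).hasDerivAt)
      (he s).hasDerivAt (hMsymm s)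
  have hV' : ∀ s, e s ⬝ᵥ matDeriv M s *ᵥ e s + 2 * (e s ⬝ᵥ M s *ᵥ deriv e s) ≤ K * V s + A :=
    fun s => hdyn s ▸ quadForm_deriv_along_observerField_le hm₁ hk (hMinv s) (hMub s _)
      (le_of_abs_le (hMrate s _)) (hΔ s)
  have hV₀ : 0 ≤ V 0 := (mul_nonneg hm₀.le (sq_nonneg _)).trans (hMlb 0 (e 0))
  refine ⟨√((V 0 + A / -K) / m₀), Real.sqrt_nonneg _, fun t ht => ?_⟩
  refine le_sqrt_div_of_mul_sq_le hm₀ ((hMlb t (e t)).trans ?_)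
  exact (le_gronwallBound_of_hasDerivAt hV hV' ht).trans (gronwallBound_le_of_neg hV₀ hK hA ht)

/-- robustness conclusion. Under a bounded disturbance `‖Δ‖ ≤ ε`,
gain condition `2k > γ` and uniform positive-definiteness bounds on `M`, the observer
error remains bounded in forward time. -/
theorem observer_error_bounded_under_disturbance
    (k γ ε m₀ m₁ : ℝ) (hm₀ : 0 < m₀) (hm₁ : 0 < m₁) (hε : 0 ≤ ε)
    (hkpos : 0 < k) (hk : 2 * k > γ)
    (M : ℝ → Matrix (Fin 6) (Fin 6) ℝ)
    (hMdiff : ∀ i j, Differentiable ℝ fun t => M t i j)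
    (hMsymm : ∀ t, (M t).IsSymm)
    (hMinv : ∀ t, IsUnit (M t).det)
    (hMlb : ∀ t, ∀ x : Fin 6 → ℝ, m₀ * eNorm x ^ 2 ≤ x ⬝ᵥ (M t).mulVec x)
    (hMub : ∀ t, ∀ x : Fin 6 → ℝ, x ⬝ᵥ (M t).mulVec x ≤ m₁ * eNorm x ^ 2)
    (hMrate : ∀ t, ∀ x : Fin 6 → ℝ, |x ⬝ᵥ (matDeriv M t).mulVec x| ≤ γ * eNorm x ^ 2)
    (Δ : ℝ → Fin 6 → ℝ) (hΔ : ∀ t, eNorm (Δ t) ≤ ε)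
    (e : ℝ → Fin 6 → ℝ) (he : Differentiable ℝ e)
    (hdyn : ∀ t, deriv e t = (-k) • (M t)⁻¹.mulVec (e t) - k • (M t)⁻¹.mulVec (Δ t)) :
    ∃ C : ℝ, 0 ≤ C ∧ ∀ t ≥ (0 : ℝ), eNorm (e t) ≤ C :=
  observer_error_bounded_under_disturbance_general k γ ε m₀ m₁ hm₀ hm₁ hk M hMdiff hMsymm hMinv hMlb
    hMub hMrate Δ hΔ e he hdyn
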